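/- arXiv:1311.3229 — 6 statements merged into one kernel-verified Lean document; each statement's English description precedes it below -/
import Mathlib

section
/- Let C₁ > 0 and C₂ > 0. Set ξ_p := (C₁ + √(C₁² + 4C₂²))/2, ψ(u) := C₂√(u(C₁−u)) / (π(C₂² + u(C₁−u))) for u ∈ (0,C₁), and r := 2C₂√(ξ_p(ξ_p−C₁)) / (2ξ_p − C₁). Then for every real ξ > ξ_p, C₂/(√(ξ(ξ−C₁)) − C₂) = ∫₀^{C₁} ψ(u)/(ξ−u) du + r/(ξ − ξ_p). (Integral representation of the JKD permeability function.) -/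
/-!
Factor `C₂² + u (C₁ - u) = (ξ_p - u) (u - ξ_m)` with `ξ_m = C₁ - ξ_p < 0`, so that partial
fractions split `ψ(u) / (ξ - u)` into multiples of `√(u (C₁ - u)) / (a - u)` for the three poles
`a = ξ_p, ξ_m, ξ`, all outside `[0, C₁]`. Each of these has the elementary integral
`π (a - C₁/2 - q)` with `q = sgn a · √(a (a - C₁))`, namely `q = C₂, -C₂, √(ξ (ξ - C₁))`.
Since `(ξ - ξ_p)(ξ - ξ_m) = ξ (ξ - C₁) - C₂²`, the three contributions together with the
point mass `r / (ξ - ξ_p)` collapse to `C₂ / (√(ξ (ξ - C₁)) - C₂)`.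
-/

/-- The pole location ξ_p of the JKD function R^D. -/
noncomputable def xip (C₁ C₂ : ℝ) : ℝ := (C₁ + Real.sqrt (C₁ ^ 2 + 4 * C₂ ^ 2)) / 2

/-- The density ψ of the absolutely continuous part of the JKD representing measure. -/
noncomputable def psi (C₁ C₂ u : ℝ) : ℝ :=
  C₂ * Real.sqrt (u * (C₁ - u)) / (Real.pi * (C₂ ^ 2 + u * (C₁ - u)))

/-- The strength r of the Dirac mass at ξ_p. -/
noncomputable def rres (C₁ C₂ : ℝ) : ℝ :=
  2 * C₂ * Real.sqrt (xip C₁ C₂ * (xip C₁ C₂ - C₁)) / (2 * xip C₁ C₂ - C₁)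

open Real Set intervalIntegral

lemma hasDerivAt_arcsin_comp {f : ℝ → ℝ} {f' c u : ℝ} (hf : HasDerivAt f f' u) (hc : 0 < c)
    (h : 1 - f u ^ 2 = c ^ 2) : HasDerivAt (fun x => arcsin (f x)) (f' / c) u := by
  have hlt : f u ^ 2 < 1 := by nlinarith
  have h₁ : f u ≠ -1 := by rintro hu; rw [hu] at hlt; norm_num at hlt
  have h₂ : f u ≠ 1 := by rintro hu; rw [hu] at hlt; norm_num at hlt
  have := (hasDerivAt_arcsin h₁ h₂).comp u hf
  rwa [h, sqrt_sq hc.le, one_div_mul_eq_div] at this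

section SqrtKernel

variable {C₁ a q u : ℝ}

lemma mul_sub_pos_of_sq_eq (hq : q ^ 2 = a * (a - C₁)) (hqa : 0 < q * a) {x : ℝ}
    (hx : x ∈ Icc 0 C₁) : 0 < q * (a - x) := by
  obtain ⟨hx₀, hx₁⟩ := hx
  rcases lt_or_gt_of_ne (show a ≠ 0 by rintro rfl; simp at hqa) with ha | ha
  · have hq : q < 0 := by nlinarith
    nlinarith
  · have hq : 0 < q := by nlinarith
    have : C₁ < a := by nlinarith
    nlinarith

lemma notMem_uIcc_of_sq_eq (hC₁ : 0 ≤ C₁) (hq : q ^ 2 = a * (a - C₁)) (hqa : 0 < q * a) :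
    a ∉ uIcc 0 C₁ := by
  rw [uIcc_of_le hC₁]
  intro ha
  simpa using mul_sub_pos_of_sq_eq hq hqa ha

/-- A primitive of `√(x (C₁ - x)) / (a - x)` on `(0, C₁)` when `q = sgn a · √(a (a - C₁))`;
it comes from the substitution `x = C₁ (1 + sin θ) / 2`. -/
noncomputable def sqrtDivSubPrimitive (C₁ a q x : ℝ) : ℝ :=
  -√(x * (C₁ - x)) + (a - C₁ / 2) * arcsin ((2 * x - C₁) / C₁)
    - q * arcsin (((2 * a - C₁) * x - a * C₁) / (C₁ * (a - x)))

lemma hasDerivAt_sqrt_mul_sub (hu : 0 < u) (huC : u < C₁) :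
    HasDerivAt (fun x => √(x * (C₁ - x))) ((C₁ - 2 * u) / (2 * √(u * (C₁ - u)))) u := by
  have h := (hasDerivAt_id' u).fun_mul ((hasDerivAt_id' u).const_sub C₁)
  refine (h.sqrt (by nlinarith)).congr_deriv ?_
  ring

lemma hasDerivAt_arcsin_two_mul_sub_div (hu : 0 < u) (huC : u < C₁) :
    HasDerivAt (fun x => arcsin ((2 * x - C₁) / C₁)) (1 / √(u * (C₁ - u))) u := by
  have hC₁ : 0 < C₁ := hu.trans huC
  have hw : 0 < √(u * (C₁ - u)) := sqrt_pos.mpr (by nlinarith)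
  have hw2 : √(u * (C₁ - u)) ^ 2 = u * (C₁ - u) := sq_sqrt (by nlinarith)
  have hf : HasDerivAt (fun x => (2 * x - C₁) / C₁) (2 / C₁) u := by
    simpa using (((hasDerivAt_id u).const_mul 2).sub_const C₁).div_const C₁
  have hc : 0 < 2 * √(u * (C₁ - u)) / C₁ := by positivity
  refine (hasDerivAt_arcsin_comp hf hc ?_).congr_deriv ?_
  · field_simp
    linear_combination (-4) * hw2
  · field_simp

lemma hasDerivAt_arcsin_mobius (hq : q ^ 2 = a * (a - C₁)) (hqa : 0 < q * a)
    (hu : 0 < u) (huC : u < C₁) :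
    HasDerivAt (fun x => arcsin (((2 * a - C₁) * x - a * C₁) / (C₁ * (a - x))))
      (q / (√(u * (C₁ - u)) * (a - u))) u := by
  have hC₁ : 0 < C₁ := hu.trans huC
  have hqu := mul_sub_pos_of_sq_eq hq hqa ⟨hu.le, huC.le⟩
  have hau : a - u ≠ 0 := by rintro h; simp [h] at hqu
  have hw : 0 < √(u * (C₁ - u)) := sqrt_pos.mpr (by nlinarith)
  have hw2 : √(u * (C₁ - u)) ^ 2 = u * (C₁ - u) := sq_sqrt (by nlinarith)
  have hf : HasDerivAt (fun x => ((2 * a - C₁) * x - a * C₁) / (C₁ * (a - x)))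
      (2 * q ^ 2 / (C₁ * (a - u) ^ 2)) u := by
    have := (((hasDerivAt_id' u).const_mul (2 * a - C₁)).sub_const (a * C₁)).div
      (((hasDerivAt_id' u).const_sub a).const_mul C₁) (by simp [hC₁.ne', hau])
    refine this.congr_deriv ?_
    rw [hq]
    field_simp
    ring
  have hc : 0 < 2 * √(u * (C₁ - u)) * (q * (a - u)) / (C₁ * (a - u) ^ 2) := by positivity
  refine (hasDerivAt_arcsin_comp hf hc ?_).congr_deriv ?_
  · field_simp
    rw [hw2, hq]
    ring
  · field_simp

lemma hasDerivAt_sqrtDivSubPrimitive (hq : q ^ 2 = a * (a - C₁)) (hqa : 0 < q * a)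
    (hu : 0 < u) (huC : u < C₁) :
    HasDerivAt (sqrtDivSubPrimitive C₁ a q) (√(u * (C₁ - u)) / (a - u)) u := by
  have hw : 0 < √(u * (C₁ - u)) := sqrt_pos.mpr (by nlinarith)
  have hw2 : √(u * (C₁ - u)) ^ 2 = u * (C₁ - u) := sq_sqrt (by nlinarith)
  have hau : a - u ≠ 0 := by
    rintro h; simpa [h] using mul_sub_pos_of_sq_eq hq hqa ⟨hu.le, huC.le⟩
  refine (((hasDerivAt_sqrt_mul_sub hu huC).neg.add
    ((hasDerivAt_arcsin_two_mul_sub_div hu huC).const_mul (a - C₁ / 2))).sub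
    ((hasDerivAt_arcsin_mobius hq hqa hu huC).const_mul q)).congr_deriv ?_
  field_simp
  linear_combination (-2) * hq - 2 * hw2

lemma continuousOn_sqrtDivSubPrimitive (hC₁ : C₁ ≠ 0) (ha : a ∉ uIcc 0 C₁) :
    ContinuousOn (sqrtDivSubPrimitive C₁ a q) (uIcc 0 C₁) := by
  have hden : ∀ x ∈ uIcc 0 C₁, C₁ * (a - x) ≠ 0 :=
    fun x hx => mul_ne_zero hC₁ (sub_ne_zero.mpr fun h => ha (h ▸ hx))
  unfold sqrtDivSubPrimitive
  have hmobius := (by fun_prop : ContinuousOn (fun x => (2 * a - C₁) * x - a * C₁) _).div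
    (by fun_prop) hden
  exact ((continuous_sqrt.comp_continuousOn (by fun_prop)).neg.add
    (continuousOn_const.mul (continuous_arcsin.comp_continuousOn (by fun_prop)))).sub
    (continuousOn_const.mul (continuous_arcsin.comp_continuousOn hmobius))

lemma sqrtDivSubPrimitive_sub (hC₁ : C₁ ≠ 0) (ha : a ≠ 0) (haC : a ≠ C₁) :
    sqrtDivSubPrimitive C₁ a q C₁ - sqrtDivSubPrimitive C₁ a q 0 = π * (a - C₁ / 2 - q) := by
  have h₁ : ((2 * a - C₁) * C₁ - a * C₁) / (C₁ * (a - C₁)) = 1 := by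
    rw [div_eq_one_iff_eq (mul_ne_zero hC₁ (sub_ne_zero.mpr haC))]; ring
  have h₀ : ((2 * a - C₁) * 0 - a * C₁) / (C₁ * (a - 0)) = -1 := by
    field_simp; ring
  have h₂ : (2 * C₁ - C₁) / C₁ = 1 := by field_simp; ring
  have h₃ : (2 * 0 - C₁) / C₁ = -1 := by rw [div_eq_iff hC₁]; ring
  simp only [sqrtDivSubPrimitive]
  rw [h₀, h₁, h₂, h₃, arcsin_one, arcsin_neg_one]
  simp only [sub_self, mul_zero, zero_mul, sqrt_zero]
  ring

lemma intervalIntegrable_sqrt_mul_sub_div_sub (ha : a ∉ uIcc 0 C₁) :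
    IntervalIntegrable (fun u => √(u * (C₁ - u)) / (a - u)) MeasureTheory.volume 0 C₁ :=
  ContinuousOn.intervalIntegrable <| (by fun_prop : ContinuousOn _ _).div (by fun_prop)
    fun x hx => sub_ne_zero.mpr fun h => ha (h ▸ hx)

theorem integral_sqrt_mul_sub_div_sub (hC₁ : 0 < C₁) (hq : q ^ 2 = a * (a - C₁))
    (hqa : 0 < q * a) :
    ∫ u in (0 : ℝ)..C₁, √(u * (C₁ - u)) / (a - u) = π * (a - C₁ / 2 - q) := by
  have ha := notMem_uIcc_of_sq_eq hC₁.le hq hqa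
  have hcont := continuousOn_sqrtDivSubPrimitive (q := q) hC₁.ne' ha
  rw [uIcc_of_le hC₁.le] at hcont
  rw [integral_eq_sub_of_hasDerivAt_of_le hC₁.le hcont
    (fun u hu => hasDerivAt_sqrtDivSubPrimitive hq hqa hu.1 hu.2)
    (intervalIntegrable_sqrt_mul_sub_div_sub ha)]
  exact sqrtDivSubPrimitive_sub hC₁.ne' (fun h => ha (h ▸ left_mem_uIcc))
    (fun h => ha (h ▸ right_mem_uIcc))

end SqrtKernel

section JKD

variable {C₁ C₂ : ℝ}

lemma xip_mul_xip_sub (C₁ C₂ : ℝ) : xip C₁ C₂ * (xip C₁ C₂ - C₁) = C₂ ^ 2 := by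
  have h := sq_sqrt (by positivity : (0 : ℝ) ≤ C₁ ^ 2 + 4 * C₂ ^ 2)
  unfold xip
  linear_combination h / 4

lemma lt_xip (hC₂ : C₂ ≠ 0) : C₁ < xip C₁ C₂ := by
  have h : |C₁| < √(C₁ ^ 2 + 4 * C₂ ^ 2) := by
    rw [← sqrt_sq_eq_abs]
    exact sqrt_lt_sqrt (sq_nonneg _) (lt_add_of_pos_right _ (by positivity))
  unfold xip
  linarith [le_abs_self C₁]

lemma rres_eq (hC₂ : 0 ≤ C₂) : rres C₁ C₂ = 2 * C₂ ^ 2 / (2 * xip C₁ C₂ - C₁) := by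
  rw [rres, xip_mul_xip_sub, sqrt_sq hC₂]
  ring

lemma psi_div_sub_eq {p ξ u : ℝ} (hp : p * (p - C₁) = C₂ ^ 2) (hpm : p ≠ C₁ - p)
    (hξp : ξ ≠ p) (hξm : ξ ≠ C₁ - p) (hpu : p ≠ u) (hmu : C₁ - p ≠ u) (hξu : ξ ≠ u) :
    psi C₁ C₂ u / (ξ - u) = C₂ / π *
      (√(u * (C₁ - u)) / (p - u) / ((p - (C₁ - p)) * (ξ - p))
        - √(u * (C₁ - u)) / (C₁ - p - u) / ((p - (C₁ - p)) * (ξ - (C₁ - p)))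
        - √(u * (C₁ - u)) / (ξ - u) / ((ξ - p) * (ξ - (C₁ - p)))) := by
  have hfac : C₂ ^ 2 + u * (C₁ - u) = (p - u) * (u - (C₁ - p)) := by
    linear_combination -hp
  rw [psi, hfac]
  field_simp [pi_ne_zero, sub_ne_zero.mpr hpm, sub_ne_zero.mpr hpu, sub_ne_zero.mpr hmu.symm,
    sub_ne_zero.mpr hmu, sub_ne_zero.mpr hξu, sub_ne_zero.mpr hξp, sub_ne_zero.mpr hξm]
  ring

lemma integral_psi_div_sub {p ξ : ℝ} (hC₁ : 0 < C₁) (hp : p * (p - C₁) = C₂ ^ 2) (hpC : C₁ < p)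
    (hξ : p < ξ) :
    ∫ u in (0 : ℝ)..C₁, psi C₁ C₂ u / (ξ - u) = C₂ / π *
      ((∫ u in (0 : ℝ)..C₁, √(u * (C₁ - u)) / (p - u)) / ((p - (C₁ - p)) * (ξ - p))
        - (∫ u in (0 : ℝ)..C₁, √(u * (C₁ - u)) / (C₁ - p - u)) / ((p - (C₁ - p)) * (ξ - (C₁ - p)))
        - (∫ u in (0 : ℝ)..C₁, √(u * (C₁ - u)) / (ξ - u)) / ((ξ - p) * (ξ - (C₁ - p)))) := by
  have hpole : ∀ a, a < 0 ∨ C₁ < a → a ∉ uIcc 0 C₁ := by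
    rw [uIcc_of_le hC₁.le]
    rintro a (ha | ha) ⟨h₀, h₁⟩ <;> linarith
  have hint : ∀ a, a < 0 ∨ C₁ < a →
      IntervalIntegrable (fun u => √(u * (C₁ - u)) / (a - u)) MeasureTheory.volume 0 C₁ :=
    fun a ha => intervalIntegrable_sqrt_mul_sub_div_sub (hpole a ha)
  have hp' := hint p (.inr hpC)
  have hm' := hint (C₁ - p) (.inl (by linarith))
  have hξ' := hint ξ (.inr (hpC.trans hξ))
  rw [integral_congr fun u hu => psi_div_sub_eq hp (by linarith) hξ.ne' (by linarith)
    (fun h => hpole p (.inr hpC) (h ▸ hu)) (fun h => hpole _ (.inl (by linarith)) (h ▸ hu))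
    (fun h => hpole ξ (.inr (hpC.trans hξ)) (h ▸ hu))]
  rw [integral_const_mul, integral_sub ((hp'.div_const _).sub (hm'.div_const _)) (hξ'.div_const _),
    integral_sub (hp'.div_const _) (hm'.div_const _), integral_div, integral_div, integral_div]

end JKD

theorem stmt0 (C₁ C₂ : ℝ) (hC₁ : 0 < C₁) (hC₂ : 0 < C₂)
    (ξ : ℝ) (hξ : xip C₁ C₂ < ξ) :
    C₂ / (Real.sqrt (ξ * (ξ - C₁)) - C₂) =
      (∫ u in (0:ℝ)..C₁, psi C₁ C₂ u / (ξ - u)) + rres C₁ C₂ / (ξ - xip C₁ C₂) := by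
  rw [rres_eq hC₂.le]
  set p := xip C₁ C₂
  have hp : p * (p - C₁) = C₂ ^ 2 := xip_mul_xip_sub C₁ C₂
  have hpC : C₁ < p := lt_xip hC₂.ne'
  set s := √(ξ * (ξ - C₁))
  have hs : s ^ 2 = ξ * (ξ - C₁) := sq_sqrt (by nlinarith)
  have hsC : C₂ < s := by nlinarith [sqrt_nonneg (ξ * (ξ - C₁))]
  rw [integral_psi_div_sub hC₁ hp hpC hξ,
    integral_sqrt_mul_sub_div_sub hC₁ (q := C₂) hp.symm (by nlinarith),
    integral_sqrt_mul_sub_div_sub hC₁ (q := -C₂) (by linear_combination -hp) (by nlinarith),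
    integral_sqrt_mul_sub_div_sub hC₁ (q := s) hs (by nlinarith)]
  have h1 : s - C₂ ≠ 0 := by linarith
  have h2 : ξ - p ≠ 0 := by linarith
  have h3 : ξ - (C₁ - p) ≠ 0 := by linarith
  have h4 : p - (C₁ - p) ≠ 0 := by linarith
  rw [show 2 * p - C₁ = p - (C₁ - p) by ring]
  field_simp
  linear_combination (-2 * (p - (C₁ - p))) * (hs + hp)
end

section
/- Let C₁ > 0 and C₂ > 0, and define ξ_p, ψ, r as in the JKD setting. Then the measure dG(u) := (ψ(u)/u) du on (0,C₁) plus the atom of mass r/ξ_p at ξ_p is a probability measure; that is, ∫₀^{C₁} ψ(u)/u du + r/ξ_p = 1. -/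
open Real Set Filter Topology MeasureTheory intervalIntegral

theorem intervalIntegrable_deriv_of_nonneg_of_tendsto {f f' : ℝ → ℝ} {a b fa fb : ℝ}
    (hab : a < b) (hderiv : ∀ x ∈ Ioo a b, HasDerivAt f (f' x) x)
    (hpos : ∀ x ∈ Ioo a b, 0 ≤ f' x)
    (ha : Tendsto f (𝓝[>] a) (𝓝 fa)) (hb : Tendsto f (𝓝[<] b) (𝓝 fb)) :
    IntervalIntegrable f' volume a b := by
  set F := Function.update (Function.update f a fa) b fb
  have hF : EqOn F f (Ioo a b) := fun x hx => by
    simp only [F, Function.update_of_ne hx.2.ne, Function.update_of_ne hx.1.ne']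
  have hFcont : ContinuousOn F (Icc a b) := by
    rw [continuousOn_update_iff, continuousOn_update_iff, Icc_sdiff_right, Ico_sdiff_left]
    refine ⟨⟨fun x hx => (hderiv x hx).continuousAt.continuousWithinAt, fun _ => ?_⟩, fun _ => ?_⟩
    · exact ha.mono_left (nhdsWithin_mono _ Ioo_subset_Ioi_self)
    · refine (hb.congr' ?_).mono_left (nhdsWithin_mono _ Ico_subset_Iio_self)
      filter_upwards [Ioo_mem_nhdsLT hab] with x hx
      exact (Function.update_of_ne hx.1.ne' _ _).symm
  refine intervalIntegrable_deriv_of_nonneg (g := F) (by rwa [uIcc_of_le hab.le]) ?_ ?_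
  · simp only [min_eq_left hab.le, max_eq_right hab.le]
    exact fun x hx => (hderiv x hx).congr_of_eventuallyEq
      (eventuallyEq_of_mem (Ioo_mem_nhds hx.1 hx.2) hF)
  · simpa only [min_eq_left hab.le, max_eq_right hab.le] using hpos

theorem hasDerivAt_mul_arctan_sub_mul_arctan (p q t : ℝ) :
    HasDerivAt (fun t => p * arctan (p * t) - q * arctan (q * t))
      ((p ^ 2 - q ^ 2) / ((1 + (p * t) ^ 2) * (1 + (q * t) ^ 2))) t := by
  have h (c : ℝ) : HasDerivAt (fun t => c * arctan (c * t)) (c ^ 2 / (1 + (c * t) ^ 2)) t := by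
    refine ((((hasDerivAt_id t).const_mul c).arctan).const_mul c).congr_deriv ?_
    simp only [id, mul_one]
    field_simp
  refine ((h p).sub (h q)).congr_deriv ?_
  field_simp
  ring

theorem hasDerivAt_sqrt_div_sqrt_sub {c u : ℝ} (hu : 0 < u) (huc : u < c) :
    HasDerivAt (fun u => √u / √(c - u)) (c / (2 * √u * √(c - u) ^ 3)) u := by
  have hcu : 0 < c - u := sub_pos.mpr huc
  have hnum := hasDerivAt_sqrt hu.ne'
  have hden := ((hasDerivAt_id u).const_sub c).sqrt hcu.ne'
  refine (hnum.div hden (sqrt_pos.mpr hcu).ne').congr_deriv ?_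
  simp only [id]
  have ha := sq_sqrt hu.le
  have hb := sq_sqrt hcu.le
  have := sqrt_pos.mpr hu
  have := sqrt_pos.mpr hcu
  field_simp
  linear_combination ha + hb

theorem tendsto_sqrt_div_sqrt_sub_atTop {c : ℝ} (hc : 0 < c) :
    Tendsto (fun u => √u / √(c - u)) (𝓝[<] c) atTop := by
  have hnum : Tendsto (fun u => √u) (𝓝[<] c) (𝓝 √c) :=
    (continuous_sqrt.tendsto c).mono_left nhdsWithin_le_nhds
  have hden : Tendsto (fun u => √(c - u)) (𝓝[<] c) (𝓝[>] 0) := by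
    refine tendsto_nhdsWithin_of_tendsto_nhds_of_eventually_within _ ?_ ?_
    · have : Continuous fun u => √(c - u) := by fun_prop
      simpa using (this.tendsto c).mono_left nhdsWithin_le_nhds
    · filter_upwards [self_mem_nhdsWithin] with u hu
      exact sqrt_pos.mpr (sub_pos.mpr hu)
  simpa only [div_eq_mul_inv, Function.comp_def] using
    hnum.pos_mul_atTop (sqrt_pos.mpr hc) (tendsto_inv_nhdsGT_zero.comp hden)

/-- At `u = C₁` the quotient `√u / √0` takes the junk value `0`: the value `(p - q) / (p + q)`
there is only a one-sided limit. -/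
noncomputable def psiDivPrimitive (C₁ p q u : ℝ) : ℝ :=
  2 / (π * (p + q)) * (p * arctan (p * (√u / √(C₁ - u))) - q * arctan (q * (√u / √(C₁ - u))))

theorem hasDerivAt_psiDivPrimitive {C₁ C₂ p q u : ℝ} (hp : 0 < p) (hq : 0 < q)
    (hpq : p * q = 1) (hd : C₂ * (p - q) = C₁) (hu : 0 < u) (huC : u < C₁) :
    HasDerivAt (psiDivPrimitive C₁ p q) (psi C₁ C₂ u / u) u := by
  have hcu : 0 < C₁ - u := sub_pos.mpr huC
  refine (((hasDerivAt_mul_arctan_sub_mul_arctan p q _).comp u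
    (hasDerivAt_sqrt_div_sqrt_sub hu huC)).const_mul _).congr_deriv ?_
  rw [psi, sqrt_mul hu.le]
  have ha : √u ^ 2 = u := sq_sqrt hu.le
  have hb : √(C₁ - u) ^ 2 = C₁ - u := sq_sqrt hcu.le
  have := sqrt_pos.mpr hu
  have := sqrt_pos.mpr hcu
  set a := √u
  set b := √(C₁ - u)
  have hC : C₁ = a ^ 2 + b ^ 2 := by linarith
  have key : (p - q) * C₁ * (C₂ ^ 2 + a ^ 2 * b ^ 2) =
      C₂ * (b ^ 2 + p ^ 2 * a ^ 2) * (b ^ 2 + q ^ 2 * a ^ 2) := by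
    linear_combination (C₁ * C₂ - a ^ 2 * b ^ 2 * (p - q)) * hd
      - (C₂ * a ^ 4 * (p * q + 1) + 2 * C₂ * a ^ 2 * b ^ 2) * hpq + C₂ * (C₁ + a ^ 2 + b ^ 2) * hC
  rw [← ha, show C₁ - a ^ 2 = b ^ 2 by linarith]
  field_simp
  linear_combination (p + q) * key

theorem tendsto_psiDivPrimitive_nhdsGT_zero {C₁ : ℝ} (hC₁ : 0 < C₁) (p q : ℝ) :
    Tendsto (psiDivPrimitive C₁ p q) (𝓝[>] 0) (𝓝 0) := by
  have ht : ContinuousAt (fun u => √u / √(C₁ - u)) 0 :=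
    continuousAt_id.sqrt.div (continuousAt_const.sub continuousAt_id).sqrt
      (sqrt_pos.mpr (by simpa using hC₁)).ne'
  have hcont : ContinuousAt (psiDivPrimitive C₁ p q) 0 :=
    continuousAt_const.mul ((hasDerivAt_mul_arctan_sub_mul_arctan p q _).continuousAt.comp ht)
  simpa [psiDivPrimitive] using hcont.tendsto.mono_left nhdsWithin_le_nhds

theorem tendsto_psiDivPrimitive_nhdsLT {C₁ p q : ℝ} (hC₁ : 0 < C₁) (hp : 0 < p) (hq : 0 < q) :
    Tendsto (psiDivPrimitive C₁ p q) (𝓝[<] C₁) (𝓝 ((p - q) / (p + q))) := by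
  have harctan {c : ℝ} (hc : 0 < c) :
      Tendsto (fun u => arctan (c * (√u / √(C₁ - u)))) (𝓝[<] C₁) (𝓝 (π / 2)) :=
    (tendsto_arctan_atTop.mono_right nhdsWithin_le_nhds).comp
      ((tendsto_sqrt_div_sqrt_sub_atTop hC₁).const_mul_atTop hc)
  have hlim : (p - q) / (p + q) = 2 / (π * (p + q)) * (p * (π / 2) - q * (π / 2)) := by
    field_simp
  rw [hlim]
  exact tendsto_const_nhds.mul
    ((tendsto_const_nhds.mul (harctan hp)).sub (tendsto_const_nhds.mul (harctan hq)))

theorem psi_div_nonneg {C₁ C₂ u : ℝ} (hC₂ : 0 ≤ C₂) (hu : 0 < u) (huC : u < C₁) :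
    0 ≤ psi C₁ C₂ u / u := by
  have : 0 < u * (C₁ - u) := mul_pos hu (sub_pos.mpr huC)
  unfold psi
  positivity

theorem integral_psi_div {C₁ C₂ p q : ℝ} (hC₁ : 0 < C₁) (hC₂ : 0 ≤ C₂) (hp : 0 < p) (hq : 0 < q)
    (hpq : p * q = 1) (hd : C₂ * (p - q) = C₁) :
    ∫ u in (0 : ℝ)..C₁, psi C₁ C₂ u / u = (p - q) / (p + q) := by
  have hderiv (u : ℝ) (hu : u ∈ Ioo 0 C₁) :=
    hasDerivAt_psiDivPrimitive hp hq hpq hd hu.1 hu.2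
  have hlim₀ := tendsto_psiDivPrimitive_nhdsGT_zero hC₁ p q
  have hlim₁ := tendsto_psiDivPrimitive_nhdsLT hC₁ hp hq
  have hint := intervalIntegrable_deriv_of_nonneg_of_tendsto hC₁ hderiv
    (fun u hu => psi_div_nonneg hC₂ hu.1 hu.2) hlim₀ hlim₁
  rw [integral_eq_sub_of_hasDerivAt_of_tendsto hC₁ hderiv hint hlim₀ hlim₁, sub_zero]

theorem xip_sq (C₁ C₂ : ℝ) : xip C₁ C₂ ^ 2 = C₁ * xip C₁ C₂ + C₂ ^ 2 := by
  have := sq_sqrt (show 0 ≤ C₁ ^ 2 + 4 * C₂ ^ 2 by positivity)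
  unfold xip
  linear_combination this / 4

theorem xip_pos {C₁ C₂ : ℝ} (hC₂ : C₂ ≠ 0) : 0 < xip C₁ C₂ := by
  have : |C₁| < √(C₁ ^ 2 + 4 * C₂ ^ 2) := by
    rw [← sqrt_sq_eq_abs]
    exact sqrt_lt_sqrt (sq_nonneg _) (lt_add_of_pos_right _ (by positivity))
  unfold xip
  linarith [neg_abs_le C₁]

theorem rres_div_xip {C₁ C₂ : ℝ} (hC₂ : 0 ≤ C₂) :
    rres C₁ C₂ / xip C₁ C₂ = 2 * C₂ ^ 2 / (xip C₁ C₂ ^ 2 + C₂ ^ 2) := by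
  have hsq := xip_sq C₁ C₂
  have hprod : xip C₁ C₂ * (xip C₁ C₂ - C₁) = C₂ ^ 2 := by linear_combination hsq
  have hden : (2 * xip C₁ C₂ - C₁) * xip C₁ C₂ = xip C₁ C₂ ^ 2 + C₂ ^ 2 := by
    linear_combination hsq
  rw [rres, hprod, sqrt_sq hC₂, div_div, hden]
  ring

/-- The measure dG(u) = (ψ(u)/u) du + (r/ξ_p) δ_{ξ_p} is a probability measure. -/
theorem stmt1 (C₁ C₂ : ℝ) (hC₁ : 0 < C₁) (hC₂ : 0 < C₂) :
    (∫ u in (0:ℝ)..C₁, psi C₁ C₂ u / u) + rres C₁ C₂ / xip C₁ C₂ = 1 := by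
  have hξ : 0 < xip C₁ C₂ := xip_pos hC₂.ne'
  have hsq := xip_sq C₁ C₂
  rw [rres_div_xip hC₂.le, integral_psi_div (p := xip C₁ C₂ / C₂) (q := C₂ / xip C₁ C₂) hC₁
    hC₂.le (by positivity) (by positivity) (by field_simp) (by field_simp; linear_combination hsq)]
  field_simp
  ring
end

section
/- Let C₁ > 0 and C₂ > 0, and define ξ_p and r as in the JKD setting. Then the limit, as real ξ tends to ξ_p from above, of (ξ − ξ_p) · C₂/(√(ξ(ξ−C₁)) − C₂) equals r = 2C₂√(ξ_p(ξ_p−C₁)) / (2ξ_p − C₁); that is, R^D has a simple pole at ξ_p with residue r. -/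
/-- R^D has a simple pole at ξ_p with residue r. -/
theorem stmt4 (C₁ C₂ : ℝ) (hC₁ : 0 < C₁) (hC₂ : 0 < C₂) :
    Filter.Tendsto
      (fun ξ : ℝ => (ξ - xip C₁ C₂) * (C₂ / (Real.sqrt (ξ * (ξ - C₁)) - C₂)))
      (nhdsWithin (xip C₁ C₂) (Set.Ioi (xip C₁ C₂)))
      (nhds (rres C₁ C₂)) := by
  set p := xip C₁ C₂ with hp
  have hs2 : Real.sqrt (C₁ ^ 2 + 4 * C₂ ^ 2) ^ 2 = C₁ ^ 2 + 4 * C₂ ^ 2 :=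
    Real.sq_sqrt (by positivity)
  have hsgt : C₁ < Real.sqrt (C₁ ^ 2 + 4 * C₂ ^ 2) := by
    nlinarith [Real.sqrt_nonneg (C₁ ^ 2 + 4 * C₂ ^ 2)]
  have hpC₁ : C₁ < p := by
    rw [hp, xip]; linarith
  have hkey : p * (p - C₁) = C₂ ^ 2 := by
    rw [hp, xip]; nlinarith
  have hsq : Real.sqrt (p * (p - C₁)) = C₂ := by
    rw [hkey, Real.sqrt_sq hC₂.le]
  have hden : (0:ℝ) < 2 * p - C₁ := by linarith
  -- the rationalized function
  set g : ℝ → ℝ := fun ξ => C₂ * (Real.sqrt (ξ * (ξ - C₁)) + C₂) / (ξ - C₁ + p) with hg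
  have heq : ∀ ξ ∈ Set.Ioi p,
      (ξ - p) * (C₂ / (Real.sqrt (ξ * (ξ - C₁)) - C₂)) = g ξ := by
    intro ξ hξ
    have hξp : p < ξ := hξ
    have hnn : 0 ≤ ξ * (ξ - C₁) := by nlinarith
    have hy2 : Real.sqrt (ξ * (ξ - C₁)) ^ 2 = ξ * (ξ - C₁) := Real.sq_sqrt hnn
    have hygt : C₂ < Real.sqrt (ξ * (ξ - C₁)) := by
      have : C₂ ^ 2 < ξ * (ξ - C₁) := by nlinarith
      nlinarith [Real.sqrt_nonneg (ξ * (ξ - C₁))]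
    have hne : Real.sqrt (ξ * (ξ - C₁)) - C₂ ≠ 0 := by linarith
    have hdne : ξ - C₁ + p ≠ 0 := by nlinarith
    rw [hg]
    field_simp
    nlinarith [hy2]
  have hgt : Filter.Tendsto g (nhdsWithin p (Set.Ioi p)) (nhds (rres C₁ C₂)) := by
    have hrres : rres C₁ C₂ = C₂ * (Real.sqrt (p * (p - C₁)) + C₂) / (p - C₁ + p) := by
      rw [rres, ← hp, hsq]; ring_nf
    rw [hrres]
    have hcont : ContinuousAt g p := by
      apply ContinuousAt.div
      · exact (continuousAt_const.mul
          (((continuousAt_id.mul (continuousAt_id.sub continuousAt_const)).sqrt).add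
            continuousAt_const))
      · exact (continuousAt_id.sub continuousAt_const).add continuousAt_const
      · exact ne_of_gt (by linarith)
    exact (hcont.tendsto).mono_left nhdsWithin_le_nhds
  exact hgt.congr' (by filter_upwards [self_mem_nhdsWithin] with ξ hξ using (heq ξ hξ).symm)
end

section
/- Let Θ₁ > 0, α_∞ > 0, let λ be a nonzero finite positive Borel measure on ℝ supported in [0, Θ₁], let a ≥ 0 and let σ be a finite positive Borel measure supported in [0, Θ₁] such that for all real s > 0, α_∞ / ( s · ∫ dλ(Θ)/(1 + sΘ) ) = a/s + ∫ dσ(Θ)/(1 + sΘ). Then a = α_∞ / λ(ℝ), i.e., the strength of the pole at s = 0 equals α_∞ divided by the total mass μ₀(λ) of λ. -/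
/-!
Multiplying the representation by `s` gives `a = α_∞ / P(s) - s ∫ dσ(Θ)/(1 + sΘ)` for every
`s > 0`. Since both measures live on `[0, ∞)`, the integrands are bounded by `1` there, so by
dominated convergence both Stieltjes transforms tend to the total masses as `s → 0⁺`; hence the
right-hand side tends to `α_∞ / μ₀(λ)`.
-/

open MeasureTheory Filter Topology Set

noncomputable def stieltjesTransform (μ : Measure ℝ) (s : ℝ) : ℝ :=
  ∫ Θ, (1 + s * Θ)⁻¹ ∂μ

lemma norm_inv_one_add_mul_le_one {s Θ : ℝ} (hs : 0 ≤ s) (hΘ : 0 ≤ Θ) :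
    ‖(1 + s * Θ)⁻¹‖ ≤ 1 := by
  have hpos : 0 < 1 + s * Θ := by positivity
  rw [Real.norm_of_nonneg (inv_nonneg.2 hpos.le)]
  exact inv_le_one_of_one_le₀ (le_add_of_nonneg_right (by positivity))

lemma tendsto_stieltjesTransform_nhdsGT_zero (μ : Measure ℝ) [IsFiniteMeasure μ]
    (hμ : ∀ᵐ Θ ∂μ, 0 ≤ Θ) :
    Tendsto (stieltjesTransform μ) (𝓝[>] 0) (𝓝 (μ univ).toReal) := by
  have hlim : Tendsto (stieltjesTransform μ) (𝓝[>] 0) (𝓝 (∫ _, (1 : ℝ) ∂μ)) := by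
    refine tendsto_integral_filter_of_dominated_convergence (fun _ ↦ 1) ?_ ?_
      (integrable_const 1) ?_
    · exact Eventually.of_forall fun s ↦
        (measurable_const.add (measurable_id.const_mul s)).inv.aestronglyMeasurable
    · filter_upwards [self_mem_nhdsWithin] with s hs
      filter_upwards [hμ] with Θ hΘ
      exact norm_inv_one_add_mul_le_one (le_of_lt hs) hΘ
    · refine Eventually.of_forall fun Θ ↦ ?_
      have hcont : ContinuousAt (fun s : ℝ ↦ (1 + s * Θ)⁻¹) 0 :=
        (continuous_const.add (continuous_id.mul continuous_const)).continuousAt.inv₀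
          (by simp)
      simpa using hcont.tendsto.mono_left nhdsWithin_le_nhds
  simpa [Measure.real] using hlim

lemma ae_nonneg_of_measure_compl_Icc_eq_zero {μ : Measure ℝ} {Θ₁ : ℝ}
    (h : μ (Icc 0 Θ₁)ᶜ = 0) : ∀ᵐ Θ ∂μ, 0 ≤ Θ :=
  ae_iff.2 (measure_mono_null (fun Θ (hΘ : ¬0 ≤ Θ) (hmem : Θ ∈ Icc 0 Θ₁) ↦ hΘ hmem.1) h)

theorem stmt12_general (Θ₁ αinf : ℝ)
    (lam : Measure ℝ) [IsFiniteMeasure lam] (hne : lam ≠ 0)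
    (hsupp : lam (Set.Icc 0 Θ₁)ᶜ = 0)
    (a : ℝ)
    (σ : Measure ℝ) [IsFiniteMeasure σ] (hσsupp : σ (Set.Icc 0 Θ₁)ᶜ = 0)
    (hrep : ∀ s : ℝ, 0 < s →
      αinf / (s * ∫ Θ : ℝ, (1 + s * Θ)⁻¹ ∂lam) =
        a / s + ∫ Θ : ℝ, (1 + s * Θ)⁻¹ ∂σ) :
    a = αinf / (lam Set.univ).toReal := by
  have hmass : (lam univ).toReal ≠ 0 :=
    (ENNReal.toReal_pos (Measure.measure_univ_ne_zero.2 hne) (measure_ne_top _ _)).ne'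
  have hP := tendsto_stieltjesTransform_nhdsGT_zero lam
    (ae_nonneg_of_measure_compl_Icc_eq_zero hsupp)
  have hQ := tendsto_stieltjesTransform_nhdsGT_zero σ
    (ae_nonneg_of_measure_compl_Icc_eq_zero hσsupp)
  have hpole : ∀ s ∈ Ioi (0 : ℝ),
      a = αinf / stieltjesTransform lam s - s * stieltjesTransform σ s := by
    intro s hs
    have h := congrArg (s * ·) (hrep s hs)
    rw [mul_add, mul_div_cancel₀ a hs.ne', ← mul_div_assoc, mul_div_mul_left _ _ hs.ne'] at h
    rw [stieltjesTransform, stieltjesTransform, h]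
    ring
  have hlim : Tendsto (fun s ↦ αinf / stieltjesTransform lam s - s * stieltjesTransform σ s)
      (𝓝[>] 0) (𝓝 (αinf / (lam univ).toReal - 0 * (σ univ).toReal)) :=
    ((tendsto_const_nhds.div hP hmass).sub
      ((tendsto_nhdsWithin_of_tendsto_nhds tendsto_id).mul hQ))
  rw [zero_mul, sub_zero] at hlim
  exact tendsto_nhds_unique
    (tendsto_const_nhds.congr' (eventually_nhdsWithin_of_forall hpole)) hlim

/-- In the integral representation of the dynamic tortuosity, the strength of
the pole at s = 0 equals α_∞ divided by the total mass of λ. -/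
theorem stmt12 (Θ₁ αinf : ℝ) (hΘ₁ : 0 < Θ₁) (hα : 0 < αinf)
    (lam : Measure ℝ) [IsFiniteMeasure lam] (hne : lam ≠ 0)
    (hsupp : lam (Set.Icc 0 Θ₁)ᶜ = 0)
    (a : ℝ) (ha : 0 ≤ a)
    (σ : Measure ℝ) [IsFiniteMeasure σ] (hσsupp : σ (Set.Icc 0 Θ₁)ᶜ = 0)
    (hrep : ∀ s : ℝ, 0 < s →
      αinf / (s * ∫ Θ : ℝ, (1 + s * Θ)⁻¹ ∂lam) =
        a / s + ∫ Θ : ℝ, (1 + s * Θ)⁻¹ ∂σ) :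
    a = αinf / (lam Set.univ).toReal :=
  stmt12_general Θ₁ αinf lam hne hsupp a σ hσsupp hrep
end

section
/- Let Θ₁ > 0, α_∞ > 0, let λ be a nonzero finite positive Borel measure on ℝ supported in [0, Θ₁], let a ≥ 0 and let σ be a finite positive Borel measure supported in [0, Θ₁] such that for all real s > 0, α_∞ / ( s · ∫ dλ(Θ)/(1 + sΘ) ) = a/s + ∫ dσ(Θ)/(1 + sΘ). Then for every integer p ≥ 1, the moments satisfy the recursion μ_p(λ) = (μ₀(λ)/α_∞) · Σ_{k+j=p−1} μ_k(σ) μ_j(λ), where the sum is over nonnegative integers k, j with k + j = p − 1. -/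
/-!
Write `F_n^μ(s) = ∫ Θⁿ/(1 + sΘ) dμ`, so that the representation reads
`α_∞ = a F_0^λ(s) + s F_0^σ(s) F_0^λ(s)` for `s > 0`. The identity
`F_n^μ(s) = μ_n(μ) - s F_{n+1}^μ(s)` expands every such relation to first order in `s`,
and `F_n^μ(s) → μ_n(μ)` as `s → 0⁺`. Hence the defect
`D_n = a F_{n+1}^λ - ∑_{k<n} μ_k(σ) F_{n-k}^λ - F_n^σ F_0^λ` satisfies
`D_n(s) = c_n - s D_{n+1}(s)` with `c_n = a μ_{n+1}(λ) - ∑_{k ≤ n} μ_k(σ) μ_{n-k}(λ)`;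
if `D_n ≡ 0` then `s D_{n+1}(s) = c_n` for all `s > 0`, and letting `s → 0⁺` gives `c_n = 0`
and `D_{n+1} ≡ 0`. Starting from `α_∞ = a μ_0(λ)`, this yields `a μ_{n+1}(λ) = ∑ μ_k(σ) μ_{n-k}(λ)`.
-/

open MeasureTheory Filter Topology Finset

namespace DynamicTortuosity

noncomputable def moment (μ : Measure ℝ) (n : ℕ) : ℝ := ∫ x, x ^ n ∂μ

noncomputable def stieltjesMoment (μ : Measure ℝ) (n : ℕ) (s : ℝ) : ℝ :=
  ∫ x, x ^ n * (1 + s * x)⁻¹ ∂μ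

lemma eq_zero_and_forall_eq_zero_of_mul_eq {h : ℝ → ℝ} {c L : ℝ}
    (hh : Tendsto h (𝓝[>] 0) (𝓝 L)) (hc : ∀ s > 0, s * h s = c) :
    c = 0 ∧ ∀ s > 0, h s = 0 := by
  have hlim : Tendsto (fun s => s * h s) (𝓝[>] 0) (𝓝 (0 * L)) :=
    (tendsto_nhdsWithin_of_tendsto_nhds tendsto_id).mul hh
  have hconst : Tendsto (fun s => s * h s) (𝓝[>] 0) (𝓝 c) :=
    tendsto_const_nhds.congr' (eventually_nhdsWithin_of_forall fun s hs => (hc s hs).symm)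
  have hc0 : c = 0 := (tendsto_nhds_unique hconst hlim).trans (zero_mul L)
  refine ⟨hc0, fun s hs => ?_⟩
  exact (mul_eq_zero.1 ((hc s hs).trans hc0)).resolve_left hs.ne'

lemma norm_pow_mul_inv_one_add_mul_le {x s : ℝ} (hx : 0 ≤ x) (hs : 0 ≤ s) (n : ℕ) :
    ‖x ^ n * (1 + s * x)⁻¹‖ ≤ x ^ n := by
  have h1 : 1 ≤ 1 + s * x := le_add_of_nonneg_right (mul_nonneg hs hx)
  rw [norm_mul, norm_pow, Real.norm_of_nonneg hx, norm_inv,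
    Real.norm_of_nonneg (zero_le_one.trans h1)]
  exact mul_le_of_le_one_right (pow_nonneg hx n) (inv_le_one_of_one_le₀ h1)

section Moments

variable {μ : Measure ℝ} (hμ : ∀ᵐ x ∂μ, 0 ≤ x) (hint : ∀ n : ℕ, Integrable (fun x => x ^ n) μ)
include hμ hint

lemma integrable_pow_mul_inv_one_add_mul (n : ℕ) {s : ℝ} (hs : 0 ≤ s) :
    Integrable (fun x => x ^ n * (1 + s * x)⁻¹) μ :=
  (hint n).mono' (by fun_prop) (hμ.mono fun _ hx => norm_pow_mul_inv_one_add_mul_le hx hs n)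

lemma norm_stieltjesMoment_le (n : ℕ) {s : ℝ} (hs : 0 ≤ s) :
    ‖stieltjesMoment μ n s‖ ≤ moment μ n :=
  norm_integral_le_of_norm_le (hint n)
    (hμ.mono fun _ hx => norm_pow_mul_inv_one_add_mul_le hx hs n)

lemma stieltjesMoment_eq_moment_sub (n : ℕ) {s : ℝ} (hs : 0 ≤ s) :
    stieltjesMoment μ n s = moment μ n - s * stieltjesMoment μ (n + 1) s := by
  unfold stieltjesMoment moment
  rw [← integral_const_mul, ← integral_sub (hint n)
    ((integrable_pow_mul_inv_one_add_mul hμ hint (n + 1) hs).const_mul s)]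
  refine integral_congr_ae (hμ.mono fun x hx => ?_)
  have : 1 + s * x ≠ 0 := by positivity
  field_simp
  ring

lemma tendsto_stieltjesMoment (n : ℕ) :
    Tendsto (stieltjesMoment μ n) (𝓝[>] 0) (𝓝 (moment μ n)) := by
  have hbdd : IsBoundedUnder (· ≤ ·) (𝓝[>] 0) (fun s => ‖stieltjesMoment μ (n + 1) s‖) :=
    isBoundedUnder_of_eventually_le (eventually_nhdsWithin_of_forall fun s hs =>
      norm_stieltjesMoment_le hμ hint (n + 1) (le_of_lt hs))
  have hsmall : Tendsto (fun s => s * stieltjesMoment μ (n + 1) s) (𝓝[>] 0) (𝓝 0) :=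
    (tendsto_nhdsWithin_of_tendsto_nhds tendsto_id).zero_mul_isBoundedUnder_le hbdd
  have hlim := (tendsto_const_nhds (x := moment μ n)).sub hsmall
  rw [sub_zero] at hlim
  exact hlim.congr' (eventually_nhdsWithin_of_forall fun s hs =>
    (stieltjesMoment_eq_moment_sub hμ hint n (le_of_lt hs)).symm)

lemma stieltjesMoment_zero_pos (hne : μ ≠ 0) {s : ℝ} (hs : 0 ≤ s) :
    0 < stieltjesMoment μ 0 s := by
  have hpos : ∀ᵐ x ∂μ, 0 < x ^ 0 * (1 + s * x)⁻¹ := hμ.mono fun x hx => by positivity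
  rw [stieltjesMoment, integral_pos_iff_support_of_nonneg_ae (hpos.mono fun _ hx => hx.le)
    (integrable_pow_mul_inv_one_add_mul hμ hint 0 hs)]
  have hfull : μ (Function.support fun x : ℝ => x ^ 0 * (1 + s * x)⁻¹)ᶜ = 0 :=
    mem_ae_iff.1 (hpos.mono fun _ hx => hx.ne')
  rw [measure_congr (ae_eq_univ.2 hfull)]
  exact Measure.measure_univ_pos.2 hne

end Moments

section Defect

variable (a : ℝ) (lam σ : Measure ℝ)

noncomputable def recursionDefect (n : ℕ) (s : ℝ) : ℝ :=
  a * stieltjesMoment lam (n + 1) s - ∑ k ∈ range n, moment σ k * stieltjesMoment lam (n - k) s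
    - stieltjesMoment σ n s * stieltjesMoment lam 0 s

variable {a lam σ} (hlam : ∀ᵐ x ∂lam, 0 ≤ x) (hlamint : ∀ n : ℕ, Integrable (fun x => x ^ n) lam)
  (hσ : ∀ᵐ x ∂σ, 0 ≤ x) (hσint : ∀ n : ℕ, Integrable (fun x => x ^ n) σ)
include hlam hlamint hσ hσint

lemma recursionDefect_eq (n : ℕ) {s : ℝ} (hs : 0 ≤ s) :
    recursionDefect a lam σ n s =
      (a * moment lam (n + 1) - ∑ k ∈ range (n + 1), moment σ k * moment lam (n - k))
        - s * recursionDefect a lam σ (n + 1) s := by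
  have hsum : ∑ k ∈ range n, moment σ k * stieltjesMoment lam (n - k) s =
      ∑ k ∈ range n, moment σ k * moment lam (n - k)
        - s * ∑ k ∈ range n, moment σ k * stieltjesMoment lam (n + 1 - k) s := by
    rw [mul_sum, ← sum_sub_distrib]
    refine sum_congr rfl fun k hk => ?_
    rw [stieltjesMoment_eq_moment_sub hlam hlamint (n - k) hs,
      show n - k + 1 = n + 1 - k by have := mem_range.1 hk; omega]
    ring
  unfold recursionDefect
  rw [sum_range_succ, sum_range_succ, hsum, Nat.sub_self, show n + 1 - n = 1 by omega,
    stieltjesMoment_eq_moment_sub hlam hlamint (n + 1) hs,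
    stieltjesMoment_eq_moment_sub hσ hσint n hs,
    stieltjesMoment_eq_moment_sub hlam hlamint 0 hs]
  ring

lemma tendsto_recursionDefect (n : ℕ) :
    Tendsto (recursionDefect a lam σ n) (𝓝[>] 0)
      (𝓝 (a * moment lam (n + 1) - ∑ k ∈ range n, moment σ k * moment lam (n - k)
        - moment σ n * moment lam 0)) :=
  (((tendsto_stieltjesMoment hlam hlamint (n + 1)).const_mul a).sub
    (tendsto_finsetSum _ fun k _ =>
      (tendsto_stieltjesMoment hlam hlamint (n - k)).const_mul (moment σ k))).sub
    ((tendsto_stieltjesMoment hσ hσint n).mul (tendsto_stieltjesMoment hlam hlamint 0))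

theorem moment_recursion_of_forall_eq {α : ℝ}
    (hid : ∀ s > 0, α = a * stieltjesMoment lam 0 s
      + s * (stieltjesMoment σ 0 s * stieltjesMoment lam 0 s)) :
    α = a * moment lam 0 ∧
      ∀ n, a * moment lam (n + 1) = ∑ k ∈ range (n + 1), moment σ k * moment lam (n - k) := by
  have hbase : ∀ s > 0, s * recursionDefect a lam σ 0 s = a * moment lam 0 - α := by
    intro s hs
    have := stieltjesMoment_eq_moment_sub hlam hlamint 0 hs.le
    simp only [recursionDefect, range_zero, sum_empty, sub_zero, zero_add]
    linear_combination hid s hs + a * this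
  have hzero : ∀ n, ∀ s > 0, recursionDefect a lam σ n s = 0 := by
    intro n
    induction n with
    | zero => exact (eq_zero_and_forall_eq_zero_of_mul_eq
        (tendsto_recursionDefect hlam hlamint hσ hσint 0) hbase).2
    | succ n ih =>
      refine (eq_zero_and_forall_eq_zero_of_mul_eq
        (c := a * moment lam (n + 1) - ∑ k ∈ range (n + 1), moment σ k * moment lam (n - k))
        (tendsto_recursionDefect hlam hlamint hσ hσint (n + 1)) fun s hs => ?_).2
      have := recursionDefect_eq (a := a) hlam hlamint hσ hσint n hs.le
      rw [ih s hs] at this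
      linear_combination this
  refine ⟨?_, fun n => ?_⟩
  · have := hbase 1 one_pos
    rw [hzero 0 1 one_pos] at this
    linarith
  · have := recursionDefect_eq (a := a) hlam hlamint hσ hσint n zero_le_one
    rw [hzero n 1 one_pos, hzero (n + 1) 1 one_pos] at this
    linarith

end Defect

lemma integrable_pow_of_ae_mem_Icc {μ : Measure ℝ} [IsFiniteMeasure μ] {T : ℝ}
    (hμ : ∀ᵐ x ∂μ, x ∈ Set.Icc 0 T) (n : ℕ) : Integrable (fun x => x ^ n) μ :=
  (integrable_const (T ^ n)).mono' (by fun_prop) (hμ.mono fun x hx => by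
    rw [norm_pow, Real.norm_of_nonneg hx.1]
    exact pow_le_pow_left₀ hx.1 hx.2 n)

lemma eq_mul_add_mul_of_div_eq {α a P S s : ℝ} (hs : 0 < s) (hP : 0 < P)
    (h : α / (s * P) = a / s + S) : α = a * P + s * (S * P) := by
  field_simp at h
  linear_combination h

end DynamicTortuosity

open DynamicTortuosity in
theorem stmt14_general (Θ₁ αinf : ℝ) (hα : 0 < αinf)
    (lam : Measure ℝ) [IsFiniteMeasure lam] (hne : lam ≠ 0)
    (hsupp : lam (Set.Icc 0 Θ₁)ᶜ = 0)
    (a : ℝ)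
    (σ : Measure ℝ) [IsFiniteMeasure σ] (hσsupp : σ (Set.Icc 0 Θ₁)ᶜ = 0)
    (hrep : ∀ s : ℝ, 0 < s →
      αinf / (s * ∫ Θ : ℝ, (1 + s * Θ)⁻¹ ∂lam) =
        a / s + ∫ Θ : ℝ, (1 + s * Θ)⁻¹ ∂σ) :
    ∀ p : ℕ, 1 ≤ p →
      (∫ Θ : ℝ, Θ ^ p ∂lam) =
        ((lam Set.univ).toReal / αinf) *
          ∑ k ∈ Finset.range p, (∫ Θ : ℝ, Θ ^ k ∂σ) * (∫ Θ : ℝ, Θ ^ (p - 1 - k) ∂lam) := by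
  have hlamIcc : ∀ᵐ x ∂lam, x ∈ Set.Icc 0 Θ₁ := mem_ae_iff.2 hsupp
  have hσIcc : ∀ᵐ x ∂σ, x ∈ Set.Icc 0 Θ₁ := mem_ae_iff.2 hσsupp
  have hlam : ∀ᵐ x ∂lam, 0 ≤ x := hlamIcc.mono fun _ hx => hx.1
  have hlamint := integrable_pow_of_ae_mem_Icc hlamIcc
  have hid : ∀ s > 0, αinf = a * stieltjesMoment lam 0 s
      + s * (stieltjesMoment σ 0 s * stieltjesMoment lam 0 s) := fun s hs =>
    eq_mul_add_mul_of_div_eq hs (stieltjesMoment_zero_pos hlam hlamint hne hs.le)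
      (by simpa only [stieltjesMoment, pow_zero, one_mul] using hrep s hs)
  obtain ⟨hα0, hrec⟩ := moment_recursion_of_forall_eq hlam hlamint
    (hσIcc.mono fun _ hx => hx.1) (integrable_pow_of_ae_mem_Icc hσIcc) hid
  have hm0 : moment lam 0 = (lam Set.univ).toReal := by simp [moment, Measure.real]
  have hm0pos : 0 < moment lam 0 := by
    rw [hm0]
    exact ENNReal.toReal_pos (Measure.measure_univ_pos.2 hne).ne' (measure_ne_top _ _)
  intro p hp
  obtain ⟨n, rfl⟩ := Nat.exists_eq_add_of_le' hp
  simp only [Nat.add_sub_cancel]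
  change moment lam (n + 1) = _ * ∑ k ∈ range (n + 1), moment σ k * moment lam (n - k)
  have ha0 : a ≠ 0 := by rintro rfl; linarith
  rw [← hrec n, ← hm0, hα0]
  field_simp

/-- Moment recursion μ_p(λ) = (μ₀(λ)/α_∞) Σ_{k+j=p−1} μ_k(σ) μ_j(λ) for p ≥ 1,
derived from the integral representation of the dynamic tortuosity. -/
theorem stmt14 (Θ₁ αinf : ℝ) (hΘ₁ : 0 < Θ₁) (hα : 0 < αinf)
    (lam : Measure ℝ) [IsFiniteMeasure lam] (hne : lam ≠ 0)
    (hsupp : lam (Set.Icc 0 Θ₁)ᶜ = 0)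
    (a : ℝ) (ha : 0 ≤ a)
    (σ : Measure ℝ) [IsFiniteMeasure σ] (hσsupp : σ (Set.Icc 0 Θ₁)ᶜ = 0)
    (hrep : ∀ s : ℝ, 0 < s →
      αinf / (s * ∫ Θ : ℝ, (1 + s * Θ)⁻¹ ∂lam) =
        a / s + ∫ Θ : ℝ, (1 + s * Θ)⁻¹ ∂σ) :
    ∀ p : ℕ, 1 ≤ p →
      (∫ Θ : ℝ, Θ ^ p ∂lam) =
        ((lam Set.univ).toReal / αinf) *
          ∑ k ∈ Finset.range p, (∫ Θ : ℝ, Θ ^ k ∂σ) * (∫ Θ : ℝ, Θ ^ (p - 1 - k) ∂lam) :=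
  stmt14_general Θ₁ αinf hα lam hne hsupp a σ hσsupp hrep
end

section
/- Let Θ₁ > 0, α_∞ > 0, let λ be a nonzero finite positive Borel measure on ℝ supported in [0, Θ₁] with λ({0}) = 0 and normalized so that ∫ Θ^{-1} dλ(Θ) = 1, let a ≥ 0 and let σ be a finite positive Borel measure supported in [0, Θ₁] such that for all real s > 0, α_∞ / ( s · ∫ dλ(Θ)/(1 + sΘ) ) = a/s + ∫ dσ(Θ)/(1 + sΘ). Then σ has an atom at 0 of mass exactly α_∞, i.e., σ({0}) = α_∞. -/
/-!
Let `s → ∞` in the representation identity. Since `s / (1 + sΘ) ↑ Θ⁻¹` for `Θ > 0`, dominated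
convergence gives `s · ∫ dλ/(1 + sΘ) → ∫ Θ⁻¹ dλ = 1`, so the left side tends to `α_∞`. On the right,
`a/s → 0` and `(1 + sΘ)⁻¹` tends to the indicator of `{0}` on `[0, ∞)` boundedly, so
`∫ dσ/(1 + sΘ) → σ {0}`.
-/

open MeasureTheory Filter Topology

lemma tendsto_inv_one_add_mul_atTop {x : ℝ} (hx : 0 ≤ x) :
    Tendsto (fun s : ℝ => (1 + s * x)⁻¹) atTop (𝓝 (({0} : Set ℝ).indicator 1 x)) := by
  rcases hx.eq_or_lt with rfl | hx
  · simp
  · rw [Set.indicator_of_notMem (by simpa using hx.ne')]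
    exact (tendsto_atTop_add_const_left _ _ (tendsto_id.atTop_mul_const hx)).inv_tendsto_atTop

lemma tendsto_mul_inv_one_add_mul_atTop {x : ℝ} (hx : 0 < x) :
    Tendsto (fun s : ℝ => s * (1 + s * x)⁻¹) atTop (𝓝 x⁻¹) := by
  have hEq : ∀ᶠ s : ℝ in atTop, (s⁻¹ + x)⁻¹ = s * (1 + s * x)⁻¹ := by
    filter_upwards [eventually_gt_atTop 0] with s hs
    field_simp
  refine Tendsto.congr' hEq ?_
  simpa using (tendsto_inv_atTop_zero.add_const x).inv₀ (by simpa using hx.ne')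

section Stieltjes

variable {μ : Measure ℝ}

lemma aestronglyMeasurable_inv_one_add_mul (s : ℝ) :
    AEStronglyMeasurable (fun x : ℝ => (1 + s * x)⁻¹) μ :=
  (measurable_const.add (measurable_id.const_mul s)).inv.aestronglyMeasurable

lemma tendsto_mul_integral_inv_one_add_mul_atTop (hpos : ∀ᵐ x ∂μ, 0 < x)
    (hint : Integrable (fun x : ℝ => x⁻¹) μ) :
    Tendsto (fun s : ℝ => s * ∫ x, (1 + s * x)⁻¹ ∂μ) atTop (𝓝 (∫ x, x⁻¹ ∂μ)) := by
  simp_rw [← integral_const_mul]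
  refine tendsto_integral_filter_of_dominated_convergence (fun x => x⁻¹)
    (Eventually.of_forall fun s => (aestronglyMeasurable_inv_one_add_mul s).const_mul s) ?_ hint
    (hpos.mono fun x hx => tendsto_mul_inv_one_add_mul_atTop hx)
  filter_upwards [eventually_gt_atTop 0] with s hs
  filter_upwards [hpos] with x hx
  have hsx : 0 < s * x := mul_pos hs hx
  calc ‖s * (1 + s * x)⁻¹‖ = s * (1 + s * x)⁻¹ := Real.norm_of_nonneg (by positivity)
    _ ≤ s * (s * x)⁻¹ := by gcongr; linarith
    _ = x⁻¹ := by field_simp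

lemma tendsto_integral_inv_one_add_mul_atTop [IsFiniteMeasure μ] (hnonneg : ∀ᵐ x ∂μ, 0 ≤ x) :
    Tendsto (fun s : ℝ => ∫ x, (1 + s * x)⁻¹ ∂μ) atTop (𝓝 (μ.real {0})) := by
  rw [← integral_indicator_one (measurableSet_singleton 0)]
  refine tendsto_integral_filter_of_dominated_convergence (fun _ => 1)
    (Eventually.of_forall aestronglyMeasurable_inv_one_add_mul) ?_ (integrable_const 1)
    (hnonneg.mono fun x hx => tendsto_inv_one_add_mul_atTop hx)
  filter_upwards [eventually_ge_atTop 0] with s hs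
  filter_upwards [hnonneg] with x hx
  rw [Real.norm_of_nonneg (by positivity)]
  exact inv_le_one_of_one_le₀ (by nlinarith)

end Stieltjes

theorem stmt15_general (Θ₁ αinf : ℝ)
    (lam : Measure ℝ)
    (hsupp : lam (Set.Icc 0 Θ₁)ᶜ = 0)
    (hatom : lam {0} = 0)
    (hnorm : ∫ Θ : ℝ, Θ⁻¹ ∂lam = 1)
    (a : ℝ)
    (σ : Measure ℝ) [IsFiniteMeasure σ] (hσsupp : σ (Set.Icc 0 Θ₁)ᶜ = 0)
    (hrep : ∀ s : ℝ, 0 < s →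
      αinf / (s * ∫ Θ : ℝ, (1 + s * Θ)⁻¹ ∂lam) =
        a / s + ∫ Θ : ℝ, (1 + s * Θ)⁻¹ ∂σ) :
    (σ {0}).toReal = αinf := by
  have hlam_pos : ∀ᵐ Θ ∂lam, 0 < Θ := by
    filter_upwards [mem_ae_iff.mpr hsupp, measure_eq_zero_iff_ae_notMem.mp hatom] with Θ hΘ hΘ0
    exact hΘ.1.lt_of_ne' hΘ0
  have hint : Integrable (fun Θ : ℝ => Θ⁻¹) lam :=
    Integrable.of_integral_ne_zero (by rw [hnorm]; exact one_ne_zero)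
  have hlhs : Tendsto (fun s : ℝ => αinf / (s * ∫ Θ, (1 + s * Θ)⁻¹ ∂lam)) atTop (𝓝 αinf) := by
    have hden := tendsto_mul_integral_inv_one_add_mul_atTop hlam_pos hint
    rw [hnorm] at hden
    simpa [Pi.div_def] using tendsto_const_nhds.div hden one_ne_zero
  have hrhs : Tendsto (fun s : ℝ => αinf / (s * ∫ Θ, (1 + s * Θ)⁻¹ ∂lam)) atTop
      (𝓝 (σ.real {0})) := by
    have hσ_nonneg : ∀ᵐ Θ ∂σ, 0 ≤ Θ := by
      filter_upwards [mem_ae_iff.mpr hσsupp] with Θ hΘ using hΘ.1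
    refine Tendsto.congr' (eventually_gt_atTop 0 |>.mono fun s hs => (hrep s hs).symm) ?_
    simpa using (tendsto_const_nhds.div_atTop tendsto_id).add
      (tendsto_integral_inv_one_add_mul_atTop hσ_nonneg)
  exact tendsto_nhds_unique hrhs hlhs

/-- If λ is normalized so that ∫ Θ⁻¹ dλ = 1 (i.e. dλ = Θ dG with G a probability
measure) and has no atom at 0, then the tortuosity representing measure σ has an
atom at 0 of mass exactly α_∞. -/
theorem stmt15 (Θ₁ αinf : ℝ) (hΘ₁ : 0 < Θ₁) (hα : 0 < αinf)
    (lam : Measure ℝ) [IsFiniteMeasure lam] (hne : lam ≠ 0)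
    (hsupp : lam (Set.Icc 0 Θ₁)ᶜ = 0)
    (hatom : lam {0} = 0)
    (hnorm : ∫ Θ : ℝ, Θ⁻¹ ∂lam = 1)
    (a : ℝ) (ha : 0 ≤ a)
    (σ : Measure ℝ) [IsFiniteMeasure σ] (hσsupp : σ (Set.Icc 0 Θ₁)ᶜ = 0)
    (hrep : ∀ s : ℝ, 0 < s →
      αinf / (s * ∫ Θ : ℝ, (1 + s * Θ)⁻¹ ∂lam) =
        a / s + ∫ Θ : ℝ, (1 + s * Θ)⁻¹ ∂σ) :
    (σ {0}).toReal = αinf :=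
  stmt15_general Θ₁ αinf lam hsupp hatom hnorm a σ hσsupp hrep
end
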